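/- Sending a bounded complex M^• of coherent sheaves on X to the 2-periodic folding F(M^•) with components ⊕_i M^{2i}(i) and ⊕_i M^{2i+1}(i) and differentials ⊕ d^{2i}, ⊕ d^{2i+1} defines an equivalence between the category of bounded complexes of coherent sheaves on X and the category of coherent factorizations of the zero potential on [X/G_m] (trivial G_m-action, twist by the identity character), which preserves homotopies and sends acyclic complexes to totally acyclic factorizations; hence it induces an equivalence D^b(coh X) ≅ D(coh[X/G_m], 0). -/

import Mathlib

/-!
A `G_m`-equivariant sheaf on `X` with trivial action is a ℤ-graded object of `coh X` (graded by
the χ-weight), and twisting by `χ^i` shifts the grading; so a factorization of the zero potential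
is a pair of graded objects `p, q : ℤ → C` with maps `φ n : p n ⟶ q n` and `ψ n : q n ⟶ p (n+1)`
(the graded components of `φ⁰ : E⁻¹ → E⁰` and `φ⁻¹ : E⁰(-1) → E⁻¹`) whose composites vanish.

In this form folding is just reindexing along `ℤ = 2ℤ ⊔ (2ℤ + 1)`: the identities `d ∘ d = 0` of a
complex are the identities `φψ = 0`, `ψφ = 0` of its folding, and commuting with `d` in degrees
`2n` and `2n + 1` is commuting with `φ n` and `ψ n`. Hence folding is faithful, full (a chain map
is assembled from its even and odd components) and essentially surjective (a factorization unfolds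
to the complex with `X^{2n} = p n`, `X^{2n+1} = q n`).
-/

open CategoryTheory

/-- A coherent factorization of the zero potential on `[X/G_m]` with trivial
`G_m`-action, in graded-component form. -/
structure ZeroFactorization (C : Type*) [Category C] [Limits.HasZeroMorphisms C] where
  p : ℤ → C
  q : ℤ → C
  φ : ∀ n : ℤ, p n ⟶ q n
  ψ : ∀ n : ℤ, q n ⟶ p (n + 1)
  φψ : ∀ n : ℤ, φ n ≫ ψ n = 0
  ψφ : ∀ n : ℤ, ψ n ≫ φ (n + 1) = 0

@[ext]
structure ZeroFactorizationHom {C : Type*} [Category C] [Limits.HasZeroMorphisms C]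
    (E F : ZeroFactorization C) where
  fp : ∀ n : ℤ, E.p n ⟶ F.p n
  fq : ∀ n : ℤ, E.q n ⟶ F.q n
  comm1 : ∀ n : ℤ, E.φ n ≫ fq n = fp n ≫ F.φ n
  comm2 : ∀ n : ℤ, E.ψ n ≫ fp (n + 1) = fq n ≫ F.ψ n

instance ZeroFactorization.category (C : Type*) [Category C] [Limits.HasZeroMorphisms C] :
    Category (ZeroFactorization C) where
  Hom E F := ZeroFactorizationHom E F
  id E := { fp := fun _ => 𝟙 _, fq := fun _ => 𝟙 _,
            comm1 := by intro n; simp, comm2 := by intro n; simp }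
  comp f g :=
    { fp := fun n => f.fp n ≫ g.fp n
      fq := fun n => f.fq n ≫ g.fq n
      comm1 := by
        intro n
        rw [← Category.assoc, f.comm1, Category.assoc, g.comm1, ← Category.assoc]
      comm2 := by
        intro n
        rw [← Category.assoc, f.comm2, Category.assoc, g.comm2, ← Category.assoc] }
  id_comp f := by
    apply ZeroFactorizationHom.ext <;> funext n <;> simp
  comp_id f := by
    apply ZeroFactorizationHom.ext <;> funext n <;> simp
  assoc f g h := by
    apply ZeroFactorizationHom.ext <;> funext n <;> simp

theorem CategoryTheory.eqToHom_comp_comp_eqToHom_of_eq {C : Type*} [Category C] {β : Sort*}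
    {P Q : β → C} (f : ∀ b, P b ⟶ Q b) {a b : β} (h : a = b) {X Y : C}
    (hXa : X = P a) (hYa : Q a = Y) (hXb : X = P b) (hYb : Q b = Y) :
    eqToHom hXa ≫ f a ≫ eqToHom hYa = eqToHom hXb ≫ f b ≫ eqToHom hYb := by
  subst h; rfl

namespace ZeroFactorization

variable {C : Type*} [Category C] [Limits.HasZeroMorphisms C]

@[simp] lemma comp_fp {E F G : ZeroFactorization C} (f : E ⟶ F) (g : F ⟶ G) (n : ℤ) :
    (f ≫ g).fp n = f.fp n ≫ g.fp n := rfl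

@[simp] lemma comp_fq {E F G : ZeroFactorization C} (f : E ⟶ F) (g : F ⟶ G) (n : ℤ) :
    (f ≫ g).fq n = f.fq n ≫ g.fq n := rfl

@[simp] lemma id_fp (E : ZeroFactorization C) (n : ℤ) : (𝟙 E : E ⟶ E).fp n = 𝟙 _ := rfl

@[simp] lemma id_fq (E : ZeroFactorization C) (n : ℤ) : (𝟙 E : E ⟶ E).fq n = 𝟙 _ := rfl

lemma hom_ext {E F : ZeroFactorization C} {f g : E ⟶ F}
    (hp : ∀ n, f.fp n = g.fp n) (hq : ∀ n, f.fq n = g.fq n) : f = g :=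
  ZeroFactorizationHom.ext (funext hp) (funext hq)

def isoOfComponents {E F : ZeroFactorization C} (ep : ∀ n, E.p n ≅ F.p n)
    (eq : ∀ n, E.q n ≅ F.q n) (comm1 : ∀ n, E.φ n ≫ (eq n).hom = (ep n).hom ≫ F.φ n)
    (comm2 : ∀ n, E.ψ n ≫ (ep (n + 1)).hom = (eq n).hom ≫ F.ψ n) : E ≅ F where
  hom := { fp := fun n => (ep n).hom, fq := fun n => (eq n).hom, comm1, comm2 }
  inv :=
    { fp := fun n => (ep n).inv
      fq := fun n => (eq n).inv
      comm1 := fun n => by rw [Iso.comp_inv_eq, Category.assoc, Iso.eq_inv_comp, comm1]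
      comm2 := fun n => by rw [Iso.comp_inv_eq, Category.assoc, Iso.eq_inv_comp, comm2] }
  hom_inv_id := hom_ext (by simp) (by simp)
  inv_hom_id := hom_ext (by simp) (by simp)

variable (C) in
abbrev fold : CochainComplex C ℤ ⥤ ZeroFactorization C where
  obj M :=
    { p := fun n => M.X (2 * n)
      q := fun n => M.X (2 * n + 1)
      φ := fun n => M.d (2 * n) (2 * n + 1)
      ψ := fun n => M.d (2 * n + 1) (2 * (n + 1))
      φψ := fun _ => M.d_comp_d _ _ _
      ψφ := fun _ => M.d_comp_d _ _ _ }
  map f :=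
    { fp := fun n => f.f (2 * n)
      fq := fun n => f.f (2 * n + 1)
      comm1 := fun _ => (f.comm _ _).symm
      comm2 := fun _ => (f.comm _ _).symm }

instance : (fold C).Faithful where
  map_injective {_ _ f g} h := by
    ext m
    obtain ⟨n, rfl | rfl⟩ := Int.even_or_odd' m
    · exact congrArg (fun u => ZeroFactorizationHom.fp u n) h
    · exact congrArg (fun u => ZeroFactorizationHom.fq u n) h

section Unfold

variable (E : ZeroFactorization C)

-- `m / 2` rounds down, so `m = 2 * (m / 2) + m % 2` with `m % 2 ∈ {0, 1}` also for `m < 0`.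
def unfoldX (m : ℤ) : C := if m % 2 = 0 then E.p (m / 2) else E.q (m / 2)

lemma unfoldX_two_mul (n : ℤ) : E.unfoldX (2 * n) = E.p n := by
  rw [unfoldX, if_pos (by omega)]; congr 1; omega

lemma unfoldX_two_mul_add_one (n : ℤ) : E.unfoldX (2 * n + 1) = E.q n := by
  rw [unfoldX, if_neg (by omega)]; congr 1; omega

def unfoldD (m : ℤ) : E.unfoldX m ⟶ E.unfoldX (m + 1) :=
  if h : m % 2 = 0 then
    eqToHom (by rw [unfoldX, if_pos h]) ≫ E.φ (m / 2) ≫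
      eqToHom (by rw [unfoldX, if_neg (by omega)]; congr 1; omega)
  else
    eqToHom (by rw [unfoldX, if_neg h]) ≫ E.ψ (m / 2) ≫
      eqToHom (by rw [unfoldX, if_pos (by omega)]; congr 1; omega)

lemma unfoldD_of_eq_two_mul {m n : ℤ} (h : m = 2 * n) :
    E.unfoldD m = eqToHom (by rw [h, unfoldX_two_mul]) ≫ E.φ n ≫
      eqToHom (by rw [h, unfoldX_two_mul_add_one]) := by
  rw [unfoldD, dif_pos (by omega)]
  exact eqToHom_comp_comp_eqToHom_of_eq E.φ (by omega) _ _ _ _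

lemma unfoldD_of_eq_two_mul_add_one {m n : ℤ} (h : m = 2 * n + 1) :
    E.unfoldD m = eqToHom (by rw [h, unfoldX_two_mul_add_one]) ≫ E.ψ n ≫
      eqToHom (by rw [show m + 1 = 2 * (n + 1) by omega, unfoldX_two_mul]) := by
  rw [unfoldD, dif_neg (by omega)]
  exact eqToHom_comp_comp_eqToHom_of_eq E.ψ (by omega) _ _ _ _

lemma unfoldD_comp_unfoldD (m : ℤ) : E.unfoldD m ≫ E.unfoldD (m + 1) = 0 := by
  obtain ⟨n, hn | hn⟩ := Int.even_or_odd' m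
  · rw [E.unfoldD_of_eq_two_mul hn, E.unfoldD_of_eq_two_mul_add_one (n := n) (by omega)]
    simp [reassoc_of% E.φψ n]
  · rw [E.unfoldD_of_eq_two_mul_add_one hn,
      E.unfoldD_of_eq_two_mul (n := n + 1) (by omega)]
    simp [reassoc_of% E.ψφ n]

abbrev unfold : CochainComplex C ℤ := CochainComplex.of E.unfoldX E.unfoldD E.unfoldD_comp_unfoldD

def foldUnfoldIso : (fold C).obj E.unfold ≅ E :=
  isoOfComponents (fun n => eqToIso (E.unfoldX_two_mul n))
    (fun n => eqToIso (E.unfoldX_two_mul_add_one n))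
    (fun n => by simp [E.unfoldD_of_eq_two_mul rfl])
    (fun n => by
      simp [CochainComplex.of.d, show 2 * n + 1 + 1 = 2 * (n + 1) by ring,
        E.unfoldD_of_eq_two_mul_add_one rfl])

instance : (fold C).EssSurj where
  mem_essImage E := ⟨E.unfold, ⟨E.foldUnfoldIso⟩⟩

end Unfold

section Full

variable {M N : CochainComplex C ℤ} (g : (fold C).obj M ⟶ (fold C).obj N)

def foldPreimageF (m : ℤ) : M.X m ⟶ N.X m :=
  if h : m % 2 = 0 then
    eqToHom (congrArg M.X (by omega)) ≫ g.fp (m / 2) ≫ eqToHom (congrArg N.X (by omega))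
  else
    eqToHom (congrArg M.X (by omega)) ≫ g.fq (m / 2) ≫ eqToHom (congrArg N.X (by omega))

lemma foldPreimageF_of_eq_two_mul {m n : ℤ} (h : m = 2 * n) :
    foldPreimageF g m = eqToHom (congrArg M.X h) ≫ g.fp n ≫ eqToHom (congrArg N.X h.symm) := by
  rw [foldPreimageF, dif_pos (by omega)]
  exact eqToHom_comp_comp_eqToHom_of_eq g.fp (by omega) _ _ _ _

lemma foldPreimageF_of_eq_two_mul_add_one {m n : ℤ} (h : m = 2 * n + 1) :
    foldPreimageF g m = eqToHom (congrArg M.X h) ≫ g.fq n ≫ eqToHom (congrArg N.X h.symm) := by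
  rw [foldPreimageF, dif_neg (by omega)]
  exact eqToHom_comp_comp_eqToHom_of_eq g.fq (by omega) _ _ _ _

def foldPreimage : M ⟶ N :=
  CochainComplex.ofHom (foldPreimageF g) fun m => by
    obtain ⟨n, rfl | rfl⟩ := Int.even_or_odd' m
    · simpa [foldPreimageF_of_eq_two_mul g rfl, foldPreimageF_of_eq_two_mul_add_one g rfl]
        using (g.comm1 n).symm
    · have h : 2 * n + 1 + 1 = 2 * (n + 1) := by ring
      have hM : M.d _ _ ≫ eqToHom (congrArg M.X h) = M.d (2 * n + 1) (2 * (n + 1)) :=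
        M.d_comp_XIsoOfEq_hom h _
      have hN : N.d _ _ ≫ eqToHom (congrArg N.X h.symm) = N.d (2 * n + 1) (2 * n + 1 + 1) :=
        N.d_comp_XIsoOfEq_hom h.symm _
      rw [foldPreimageF_of_eq_two_mul_add_one g rfl, foldPreimageF_of_eq_two_mul g h,
        reassoc_of% hM, ← hN]
      simp only [eqToHom_refl, Category.id_comp, Category.comp_id, ← Category.assoc]
      exact congrArg (· ≫ _) (g.comm2 n).symm

instance : (fold C).Full where
  map_surjective g := ⟨foldPreimage g, hom_ext
    (fun n => by simp [foldPreimage, foldPreimageF_of_eq_two_mul g rfl])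
    (fun n => by simp [foldPreimage, foldPreimageF_of_eq_two_mul_add_one g rfl])⟩

end Full

instance : (fold C).IsEquivalence where

end ZeroFactorization

/-- The 2-periodic folding is an equivalence between complexes of coherent
sheaves and factorizations of the zero potential. -/
theorem folding_equivalence
    (C : Type*) [Category C] [Preadditive C] :
    ∃ E : CochainComplex C ℤ ≌ ZeroFactorization C,
      ∀ M : CochainComplex C ℤ,
        (∀ n : ℤ, (E.functor.obj M).p n = M.X (2 * n)) ∧
        (∀ n : ℤ, (E.functor.obj M).q n = M.X (2 * n + 1)) :=
  ⟨(ZeroFactorization.fold C).asEquivalence, fun _ => ⟨fun _ => rfl, fun _ => rfl⟩⟩
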